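/- For a generic fuzzy map F (with p_σ > 0 for all permutations σ in the full symmetric group S_n), restricted to a block B_γ spanned by computational ket-bras with counting matrix γ, all matrix elements of F in this basis are strictly positive, and the uniform combination of all basis ket-bras in B_γ is a fixed point of F. -/
import Mathlib


open Matrix

/-- Permutation unitary on `(ℂ^d)^{⊗n}`. -/
noncomputable def permM (n d : ℕ) (σ : Equiv.Perm (Fin n)) :
    Matrix (Fin n → Fin d) (Fin n → Fin d) ℂ :=
  fun x y => if x = y ∘ σ then 1 else 0

/-- Computational-basis ket-bra `|x⟩⟨y|`. -/
noncomputable def ketbra (n d : ℕ) (x y : Fin n → Fin d) :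
    Matrix (Fin n → Fin d) (Fin n → Fin d) ℂ :=
  fun a b => if a = x ∧ b = y then 1 else 0

/-- `(x, y)` has counting matrix equal to that of the reference pair `(x₀, y₀)`,
i.e. it belongs to the block `B_γ`. -/
def inBlock (n d : ℕ) (x₀ y₀ x y : Fin n → Fin d) : Prop :=
  ∀ i j : Fin d, (Finset.univ.filter fun k => x k = i ∧ y k = j).card
    = (Finset.univ.filter fun k => x₀ k = i ∧ y₀ k = j).card

instance (n d : ℕ) (x₀ y₀ x y : Fin n → Fin d) : Decidable (inBlock n d x₀ y₀ x y) :=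
  by unfold inBlock; infer_instance

lemma comp_symm_eq {n d : ℕ} (σ : Equiv.Perm (Fin n)) (a x : Fin n → Fin d) :
    a ∘ σ.symm = x ↔ a = x ∘ σ := by
  constructor <;> intro h <;> funext k
  · have := congrFun h (σ k); simpa using this
  · have := congrFun h (σ.symm k); simpa using this

lemma permM_mul {n d : ℕ} (σ : Equiv.Perm (Fin n))
    (M : Matrix (Fin n → Fin d) (Fin n → Fin d) ℂ) (a b : Fin n → Fin d) :
    (permM n d σ * M) a b = M (a ∘ σ.symm) b := by
  rw [Matrix.mul_apply]
  rw [Finset.sum_eq_single (a ∘ σ.symm)]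
  · simp only [permM]
    rw [if_pos ((comp_symm_eq σ a (a ∘ σ.symm)).mp rfl), one_mul]
  · intro c _ hc
    simp only [permM]
    rw [if_neg, zero_mul]
    intro h; exact hc (((comp_symm_eq σ a c).mpr h).symm ▸ rfl)
  · simp

lemma mul_permM_H {n d : ℕ} (σ : Equiv.Perm (Fin n))
    (M : Matrix (Fin n → Fin d) (Fin n → Fin d) ℂ) (a b : Fin n → Fin d) :
    (M * (permM n d σ)ᴴ) a b = M a (b ∘ σ.symm) := by
  rw [Matrix.mul_apply]
  rw [Finset.sum_eq_single (b ∘ σ.symm)]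
  · simp only [permM, Matrix.conjTranspose_apply]
    rw [if_pos ((comp_symm_eq σ b (b ∘ σ.symm)).mp rfl)]
    simp
  · intro c _ hc
    simp only [permM, Matrix.conjTranspose_apply]
    rw [if_neg, star_zero, mul_zero]
    intro h; exact hc (((comp_symm_eq σ b c).mpr h).symm ▸ rfl)
  · simp

lemma conj_ketbra {n d : ℕ} (σ : Equiv.Perm (Fin n)) (x y : Fin n → Fin d) :
    permM n d σ * ketbra n d x y * (permM n d σ)ᴴ = ketbra n d (x ∘ σ) (y ∘ σ) := by
  ext a b
  rw [mul_permM_H, permM_mul]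
  simp only [ketbra, comp_symm_eq]

lemma trace_ketbra {n d : ℕ} (x' y' a b : Fin n → Fin d) :
    ((ketbra n d x' y')ᴴ * ketbra n d a b).trace = if x' = a ∧ y' = b then 1 else 0 := by
  classical
  simp only [Matrix.trace, Matrix.diag, Matrix.mul_apply, Matrix.conjTranspose_apply, ketbra]
  rw [Finset.sum_comm]
  rw [Finset.sum_eq_single x']
  · rw [Finset.sum_eq_single y']
    · simp [and_comm]
    · intro c _ hc; simp [hc, Ne.symm hc]
    · simp
  · intro c _ hc
    apply Finset.sum_eq_zero
    intro i _
    simp [hc, Ne.symm hc]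
  · simp

lemma exists_perm_comp {α β : Type*} [Fintype α] [DecidableEq α] [DecidableEq β]
    (f g : α → β)
    (h : ∀ b, (Finset.univ.filter fun k => f k = b).card
        = (Finset.univ.filter fun k => g k = b).card) :
    ∃ σ : Equiv.Perm α, f ∘ σ = g := by
  have he : ∀ b, Nonempty ({k // g k = b} ≃ {k // f k = b}) := by
    intro b
    refine Fintype.card_eq.mp ?_
    simp only [Fintype.card_subtype]
    exact (h b).symm
  let e : ∀ b, {k // g k = b} ≃ {k // f k = b} := fun b => (he b).some
  refine ⟨(Equiv.sigmaFiberEquiv g).symm.trans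
    ((Equiv.sigmaCongrRight e).trans (Equiv.sigmaFiberEquiv f)), funext fun k => ?_⟩
  exact (e (g k) ⟨k, rfl⟩).2

lemma inBlock_card {n d : ℕ} (σ : Equiv.Perm (Fin n)) (x y : Fin n → Fin d) (i j : Fin d) :
    (Finset.univ.filter fun k => (x ∘ σ) k = i ∧ (y ∘ σ) k = j).card
      = (Finset.univ.filter fun k => x k = i ∧ y k = j).card := by
  exact Finset.card_equiv σ (by simp)

lemma inBlock_comp {n d : ℕ} (x₀ y₀ x y : Fin n → Fin d) (σ : Equiv.Perm (Fin n))
    (h : inBlock n d x₀ y₀ x y) : inBlock n d x₀ y₀ (x ∘ σ) (y ∘ σ) := by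
  intro i j
  rw [inBlock_card σ x y i j]
  exact h i j

/-- for a generic fuzzy map `F` (all `p_σ > 0` over the full symmetric
group), all Hilbert–Schmidt matrix elements `⟨|x'⟩⟨y'|, F[|x⟩⟨y|]⟩` within a block `B_γ`
are strictly positive (real), and the uniform combination of all ket-bras of the block is
a fixed point of `F`. -/
theorem stmt17 (n d : ℕ) (p : Equiv.Perm (Fin n) → ℝ)
    (hp : ∀ σ, 0 < p σ) (hsum : ∑ σ, p σ = 1)
    (x₀ y₀ : Fin n → Fin d) :
    (∀ x y x' y' : Fin n → Fin d, inBlock n d x₀ y₀ x y → inBlock n d x₀ y₀ x' y' →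
      0 < ((ketbra n d x' y')ᴴ *
            ∑ σ, (p σ : ℂ) • (permM n d σ * ketbra n d x y * (permM n d σ)ᴴ)).trace.re
      ∧ ((ketbra n d x' y')ᴴ *
            ∑ σ, (p σ : ℂ) • (permM n d σ * ketbra n d x y * (permM n d σ)ᴴ)).trace.im = 0)
    ∧ (∑ σ, (p σ : ℂ) • (permM n d σ *
          (∑ q ∈ Finset.univ.filter
              (fun q : (Fin n → Fin d) × (Fin n → Fin d) => inBlock n d x₀ y₀ q.1 q.2),
            ketbra n d q.1 q.2) * (permM n d σ)ᴴ))
        = ∑ q ∈ Finset.univ.filter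
            (fun q : (Fin n → Fin d) × (Fin n → Fin d) => inBlock n d x₀ y₀ q.1 q.2),
          ketbra n d q.1 q.2 := by
  classical
  constructor
  · intro x y x' y' hxy hxy'
    have key : ((ketbra n d x' y')ᴴ *
          ∑ σ, (p σ : ℂ) • (permM n d σ * ketbra n d x y * (permM n d σ)ᴴ)).trace
        = (((∑ σ : Equiv.Perm (Fin n), if x ∘ ⇑σ = x' ∧ y ∘ ⇑σ = y' then p σ else 0 : ℝ)) : ℂ) := by
      rw [Matrix.mul_sum, Matrix.trace_sum]
      push_cast
      refine Finset.sum_congr rfl fun σ _ => ?_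
      rw [Matrix.mul_smul, Matrix.trace_smul, conj_ketbra, trace_ketbra]
      by_cases h : x ∘ σ = x' ∧ y ∘ σ = y'
      · rw [if_pos ⟨h.1.symm, h.2.symm⟩, if_pos h, smul_eq_mul, mul_one]
      · rw [if_neg (fun hc => h ⟨hc.1.symm, hc.2.symm⟩), if_neg h, smul_zero, Complex.ofReal_zero]
    -- existence of a permutation matching (x, y) to (x', y')
    have hcount : ∀ b : Fin d × Fin d,
        (Finset.univ.filter fun k => (x k, y k) = b).card
          = (Finset.univ.filter fun k => (x' k, y' k) = b).card := by
      intro b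
      have := (hxy b.1 b.2).trans (hxy' b.1 b.2).symm
      simpa [Prod.ext_iff] using this
    obtain ⟨σ₀, hσ₀⟩ := exists_perm_comp (fun k => (x k, y k)) (fun k => (x' k, y' k)) hcount
    have hx0 : x ∘ ⇑σ₀ = x' ∧ y ∘ ⇑σ₀ = y' := by
      constructor
      · funext k
        exact (Prod.ext_iff.mp (congrFun hσ₀ k)).1
      · funext k
        exact (Prod.ext_iff.mp (congrFun hσ₀ k)).2
    rw [key]
    refine ⟨?_, by simp⟩
    rw [Complex.ofReal_re]
    refine Finset.sum_pos' (fun σ _ => ?_) ⟨σ₀, Finset.mem_univ σ₀, ?_⟩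
    · split_ifs with h
      · exact (hp σ).le
      · exact le_refl 0
    · rw [if_pos hx0]; exact hp σ₀
  · have hconj : ∀ σ : Equiv.Perm (Fin n),
        permM n d σ * (∑ q ∈ Finset.univ.filter
            (fun q : (Fin n → Fin d) × (Fin n → Fin d) => inBlock n d x₀ y₀ q.1 q.2),
          ketbra n d q.1 q.2) * (permM n d σ)ᴴ
        = ∑ q ∈ Finset.univ.filter
            (fun q : (Fin n → Fin d) × (Fin n → Fin d) => inBlock n d x₀ y₀ q.1 q.2),
          ketbra n d q.1 q.2 := by
      intro σ
      rw [Finset.mul_sum, Finset.sum_mul]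
      simp only [conj_ketbra]
      refine Finset.sum_bij' (fun q _ => ((q.1 ∘ σ, q.2 ∘ σ) : (Fin n → Fin d) × (Fin n → Fin d)))
        (fun q _ => ((q.1 ∘ σ.symm, q.2 ∘ σ.symm) : (Fin n → Fin d) × (Fin n → Fin d)))
        ?_ ?_ ?_ ?_ ?_
      · intro q hq
        simp only [Finset.mem_filter, Finset.mem_univ, true_and] at hq ⊢
        exact inBlock_comp x₀ y₀ q.1 q.2 σ hq
      · intro q hq
        simp only [Finset.mem_filter, Finset.mem_univ, true_and] at hq ⊢
        exact inBlock_comp x₀ y₀ q.1 q.2 σ.symm hq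
      · intro q _
        ext <;> simp
      · intro q _
        ext <;> simp
      · intro q _
        rfl
    calc ∑ σ, (p σ : ℂ) • (permM n d σ *
          (∑ q ∈ Finset.univ.filter
              (fun q : (Fin n → Fin d) × (Fin n → Fin d) => inBlock n d x₀ y₀ q.1 q.2),
            ketbra n d q.1 q.2) * (permM n d σ)ᴴ)
        = ∑ σ, (p σ : ℂ) • (∑ q ∈ Finset.univ.filter
              (fun q : (Fin n → Fin d) × (Fin n → Fin d) => inBlock n d x₀ y₀ q.1 q.2),
            ketbra n d q.1 q.2) := by
          refine Finset.sum_congr rfl fun σ _ => ?_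
          rw [hconj σ]
      _ = _ := by
          rw [← Finset.sum_smul]
          have : (∑ σ, (p σ : ℂ)) = 1 := by
            rw [← Complex.ofReal_sum, hsum, Complex.ofReal_one]
          rw [this, one_smul]
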